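/- arXiv:1407.1272 — 2 statements merged into one kernel-verified Lean document; each statement's English description precedes it below -/
import Mathlib

section
/- Let A be a symmetric positive-definite n×n real matrix and b ∈ ℝⁿ. Starting from any x₀ with residual r₀ = b - Ax₀ and h₀ = r₀, define the conjugate gradient recurrences rᵢ₊₁ = rᵢ - αᵢAhᵢ, hᵢ₊₁ = rᵢ₊₁ + βᵢhᵢ, xᵢ₊₁ = xᵢ + αᵢhᵢ with αᵢ = |rᵢ|²/(hᵢᵀAhᵢ) and βᵢ = |rᵢ₊₁|²/|rᵢ|² (provided the residuals are nonzero). Then the residuals r₀, r₁, ..., rₖ are pairwise orthogonal, and hence some residual rₘ with m ≤ n vanishes, so the exact minimizer of f(x) = c - bᵀx + (1/2)xᵀAx is found in at most n steps. -/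
/-!
The exact line search `αᵢ` makes `rᵢ₊₁` orthogonal to `hᵢ` and to `rᵢ`, and the Fletcher–Reeves
coefficient `βᵢ` makes `hᵢ₊₁` `A`-conjugate to `hᵢ`; since `A hᵢ` is a multiple of `rᵢ - rᵢ₊₁`,
an induction on the step shows that, as long as no residual vanishes, all residuals are
mutually orthogonal and all directions mutually `A`-conjugate. Nonzero orthogonal vectors of `ℝⁿ`
are linearly independent, so one of `r₀, …, rₙ` vanishes. At the first vanishing residual
`rₘ = b - A xₘ = 0`, and `f y - f xₘ = ½ (y - xₘ)ᵀ A (y - xₘ) ≥ 0`.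
-/

open Matrix

section

variable {ι : Type*} [Fintype ι]

theorem Matrix.IsHermitian.dotProduct_mulVec_comm {R : Type*} [CommSemiring R] [StarRing R]
    [TrivialStar R] {A : Matrix ι ι R} (hA : A.IsHermitian) (u v : ι → R) :
    u ⬝ᵥ A *ᵥ v = v ⬝ᵥ A *ᵥ u := by
  rw [dotProduct_mulVec, ← mulVec_transpose, ← conjTranspose_eq_transpose_of_trivial, hA.eq,
    dotProduct_comm]

theorem Matrix.PosDef.dotProduct_mulVec_self_pos {A : Matrix ι ι ℝ} (hA : A.PosDef) {u : ι → ℝ}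
    (hu : u ≠ 0) : 0 < u ⬝ᵥ A *ᵥ u := by
  simpa using hA.dotProduct_mulVec_pos hu

theorem linearIndependent_of_ne_zero_of_dotProduct_eq_zero {κ : Type*} {v : κ → ι → ℝ}
    (hz : ∀ k, v k ≠ 0) (ho : Pairwise fun k l => v k ⬝ᵥ v l = 0) :
    LinearIndependent ℝ v := by
  have hli : LinearIndependent ℝ fun k => (WithLp.toLp 2 (v k) : EuclideanSpace ℝ ι) :=
    linearIndependent_of_ne_zero_of_inner_eq_zero (fun k => by simpa using hz k)
      fun k l hkl => by simpa [EuclideanSpace.inner_eq_star_dotProduct] using ho hkl.symm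
  exact hli.map' (WithLp.linearEquiv 2 ℝ (ι → ℝ)).toLinearMap (LinearEquiv.ker _)

theorem exists_le_card_eq_zero_of_dotProduct_eq_zero {v : ℕ → ι → ℝ}
    (ho : ∀ i j, i < j → (∀ k ≤ j, v k ≠ 0) → v i ⬝ᵥ v j = 0) :
    ∃ m ≤ Fintype.card ι, v m = 0 := by
  by_contra! hne
  have hli : LinearIndependent ℝ fun k : Fin (Fintype.card ι + 1) => v k :=
    linearIndependent_of_ne_zero_of_dotProduct_eq_zero (fun k => hne k (by omega))
      fun k l hkl => by
        rcases lt_or_gt_of_ne (Fin.val_injective.ne hkl) with hlt | hlt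
        · exact ho k l hlt fun m hm => hne m (by omega)
        · rw [dotProduct_comm]
          exact ho l k hlt fun m hm => hne m (by omega)
  simpa using hli.fintype_card_le_finrank

theorem quadratic_le_of_mulVec_eq {A : Matrix ι ι ℝ} (hA : A.PosSemidef) {b x : ι → ℝ}
    (hx : A *ᵥ x = b) (c : ℝ) (y : ι → ℝ) :
    c - b ⬝ᵥ x + 1 / 2 * (x ⬝ᵥ A *ᵥ x) ≤ c - b ⬝ᵥ y + 1 / 2 * (y ⬝ᵥ A *ᵥ y) := by
  have hd : 0 ≤ (y - x) ⬝ᵥ A *ᵥ (y - x) := by simpa using hA.dotProduct_mulVec_nonneg (y - x)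
  have hsymm := hA.isHermitian.dotProduct_mulVec_comm x y
  subst hx
  simp only [mulVec_sub, sub_dotProduct, dotProduct_sub] at hd
  rw [dotProduct_comm (A *ᵥ x) x, dotProduct_comm (A *ᵥ x) y]
  linarith

theorem residual_eq_sub_mulVec {A : Matrix ι ι ℝ} {b : ι → ℝ} {r h x : ℕ → ι → ℝ} {α : ℕ → ℝ}
    (hr0 : r 0 = b - A *ᵥ x 0) (hr : ∀ i, r i ≠ 0 → r (i + 1) = r i - α i • A *ᵥ h i)
    (hx : ∀ i, r i ≠ 0 → x (i + 1) = x i + α i • h i) :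
    ∀ k, (∀ j < k, r j ≠ 0) → r k = b - A *ᵥ x k
  | 0, _ => hr0
  | k + 1, hk => by
    rw [hr k (hk k k.lt_succ_self), hx k (hk k k.lt_succ_self), mulVec_add, mulVec_smul,
      residual_eq_sub_mulVec hr0 hr hx k fun j hj => hk j (hj.trans k.lt_succ_self)]
    abel

variable {A : Matrix ι ι ℝ} {r h : ℕ → ι → ℝ}

structure IsCGSequence (A : Matrix ι ι ℝ) (r h : ℕ → ι → ℝ) : Prop where
  direction_zero : h 0 = r 0
  residual_succ (i : ℕ) : r i ≠ 0 →
    r (i + 1) = r i - ((r i ⬝ᵥ r i) / (h i ⬝ᵥ A *ᵥ h i)) • A *ᵥ h i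
  direction_succ (i : ℕ) : r i ≠ 0 →
    h (i + 1) = r (i + 1) + ((r (i + 1) ⬝ᵥ r (i + 1)) / (r i ⬝ᵥ r i)) • h i

structure CGInvariant (A : Matrix ι ι ℝ) (r h : ℕ → ι → ℝ) (j : ℕ) : Prop where
  residual_orthogonal : ∀ i i', i < i' → i' ≤ j → r i ⬝ᵥ r i' = 0
  direction_conjugate : ∀ i i', i < i' → i' ≤ j → h i ⬝ᵥ A *ᵥ h i' = 0
  direction_residual : ∀ i i', i < i' → i' ≤ j → h i ⬝ᵥ r i' = 0
  direction_residual_self : ∀ i ≤ j, h i ⬝ᵥ r i = r i ⬝ᵥ r i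

namespace IsCGSequence

theorem dotProduct_residual_succ (hcg : IsCGSequence A r h) {i : ℕ} (hi : r i ≠ 0)
    (v : ι → ℝ) :
    v ⬝ᵥ r (i + 1) = v ⬝ᵥ r i - (r i ⬝ᵥ r i) / (h i ⬝ᵥ A *ᵥ h i) * (v ⬝ᵥ A *ᵥ h i) := by
  rw [hcg.residual_succ i hi, dotProduct_sub, dotProduct_smul, smul_eq_mul]

theorem residual_succ_eq_sub (hcg : IsCGSequence A r h) {i : ℕ} (hi : r i ≠ 0) :
    r (i + 1) = h (i + 1) - ((r (i + 1) ⬝ᵥ r (i + 1)) / (r i ⬝ᵥ r i)) • h i :=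
  eq_sub_of_add_eq (hcg.direction_succ i hi).symm

theorem mulVec_direction_eq (hcg : IsCGSequence A r h) {i : ℕ} (hi : r i ≠ 0)
    (hAh : h i ⬝ᵥ A *ᵥ h i ≠ 0) :
    A *ᵥ h i = ((h i ⬝ᵥ A *ᵥ h i) / (r i ⬝ᵥ r i)) • (r i - r (i + 1)) := by
  have hrr : r i ⬝ᵥ r i ≠ 0 := by rwa [Ne, dotProduct_self_eq_zero]
  have hcancel : (h i ⬝ᵥ A *ᵥ h i) / (r i ⬝ᵥ r i) * ((r i ⬝ᵥ r i) / (h i ⬝ᵥ A *ᵥ h i)) = 1 := by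
    field_simp
  rw [hcg.residual_succ i hi, sub_sub_cancel, smul_smul, hcancel, one_smul]

theorem cgInvariant_zero (hcg : IsCGSequence A r h) : CGInvariant A r h 0 where
  residual_orthogonal _ _ _ _ := by omega
  direction_conjugate _ _ _ _ := by omega
  direction_residual _ _ _ _ := by omega
  direction_residual_self i hi := by
    obtain rfl := Nat.le_zero.mp hi
    rw [hcg.direction_zero]

end IsCGSequence

namespace CGInvariant

variable {j : ℕ}

theorem direction_ne_zero (I : CGInvariant A r h j) (hne : ∀ k ≤ j, r k ≠ 0) {i : ℕ}
    (hi : i ≤ j) : h i ≠ 0 := by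
  intro h0
  have hrr := I.direction_residual_self i hi
  rw [h0, zero_dotProduct, eq_comm, dotProduct_self_eq_zero] at hrr
  exact hne i hi hrr

theorem residual_dotProduct_mulVec (I : CGInvariant A r h j) (hcg : IsCGSequence A r h)
    (hne : ∀ k ≤ j, r k ≠ 0) {i : ℕ} (hi : i ≤ j) :
    r i ⬝ᵥ A *ᵥ h j = h i ⬝ᵥ A *ᵥ h j := by
  cases i with
  | zero => rw [hcg.direction_zero]
  | succ k =>
    rw [hcg.residual_succ_eq_sub (hne k (by omega)), sub_dotProduct, smul_dotProduct,
      I.direction_conjugate k j (by omega) le_rfl, smul_zero, sub_zero]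

theorem direction_dotProduct_mulVec_ne_zero (I : CGInvariant A r h j) (hA : A.PosDef)
    (hne : ∀ k ≤ j, r k ≠ 0) {i : ℕ} (hi : i ≤ j) : h i ⬝ᵥ A *ᵥ h i ≠ 0 :=
  (hA.dotProduct_mulVec_self_pos (I.direction_ne_zero hne hi)).ne'

theorem residual_dotProduct_residual_succ (I : CGInvariant A r h j) (hA : A.PosDef)
    (hcg : IsCGSequence A r h) (hne : ∀ k ≤ j, r k ≠ 0) {i : ℕ} (hi : i ≤ j) :
    r i ⬝ᵥ r (j + 1) = 0 := by
  rw [hcg.dotProduct_residual_succ (hne j le_rfl), I.residual_dotProduct_mulVec hcg hne hi]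
  rcases hi.lt_or_eq with hlt | rfl
  · rw [I.residual_orthogonal i j hlt le_rfl, I.direction_conjugate i j hlt le_rfl]
    ring
  · rw [div_mul_cancel₀ _ (I.direction_dotProduct_mulVec_ne_zero hA hne le_rfl), sub_self]

theorem direction_dotProduct_residual_succ (I : CGInvariant A r h j) (hA : A.PosDef)
    (hcg : IsCGSequence A r h) (hne : ∀ k ≤ j, r k ≠ 0) {i : ℕ} (hi : i ≤ j) :
    h i ⬝ᵥ r (j + 1) = 0 := by
  rw [hcg.dotProduct_residual_succ (hne j le_rfl)]
  rcases hi.lt_or_eq with hlt | rfl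
  · rw [I.direction_residual i j hlt le_rfl, I.direction_conjugate i j hlt le_rfl]
    ring
  · rw [I.direction_residual_self i le_rfl,
      div_mul_cancel₀ _ (I.direction_dotProduct_mulVec_ne_zero hA hne le_rfl), sub_self]

theorem direction_dotProduct_mulVec_direction_succ (I : CGInvariant A r h j) (hA : A.PosDef)
    (hcg : IsCGSequence A r h) (hne : ∀ k ≤ j, r k ≠ 0) {i : ℕ} (hi : i ≤ j) :
    h i ⬝ᵥ A *ᵥ h (j + 1) = 0 := by
  rw [hcg.direction_succ j (hne j le_rfl), mulVec_add, mulVec_smul, dotProduct_add,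
    dotProduct_smul, hA.isHermitian.dotProduct_mulVec_comm,
    hcg.mulVec_direction_eq (hne i hi) (I.direction_dotProduct_mulVec_ne_zero hA hne hi),
    dotProduct_smul, dotProduct_sub, smul_eq_mul, smul_eq_mul,
    dotProduct_comm (r (j + 1)) (r i), I.residual_dotProduct_residual_succ hA hcg hne hi]
  rcases hi.lt_or_eq with hlt | rfl
  · rw [dotProduct_comm (r (j + 1)), I.residual_dotProduct_residual_succ hA hcg hne hlt,
      I.direction_conjugate i j hlt le_rfl]
    ring
  · ring

theorem succ (I : CGInvariant A r h j) (hA : A.PosDef) (hcg : IsCGSequence A r h)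
    (hne : ∀ k ≤ j, r k ≠ 0) : CGInvariant A r h (j + 1) := by
  have extend : ∀ {P : ℕ → ℕ → Prop}, (∀ i i', i < i' → i' ≤ j → P i i') →
      (∀ i ≤ j, P i (j + 1)) → ∀ i i', i < i' → i' ≤ j + 1 → P i i' := by
    intro P hold hnew i i' hlt hle
    rcases Nat.le_succ_iff.mp hle with hle | rfl
    · exact hold i i' hlt hle
    · exact hnew i (Nat.lt_succ_iff.mp hlt)
  refine ⟨extend I.residual_orthogonal fun i => I.residual_dotProduct_residual_succ hA hcg hne,
    extend I.direction_conjugate fun i => I.direction_dotProduct_mulVec_direction_succ hA hcg hne,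
    extend I.direction_residual fun i => I.direction_dotProduct_residual_succ hA hcg hne,
    fun i hi => ?_⟩
  rcases Nat.le_succ_iff.mp hi with hi | rfl
  · exact I.direction_residual_self i hi
  · rw [hcg.direction_succ j (hne j le_rfl), add_dotProduct, smul_dotProduct,
      I.direction_dotProduct_residual_succ hA hcg hne le_rfl, smul_zero, add_zero]

end CGInvariant

namespace IsCGSequence

theorem cgInvariant (hcg : IsCGSequence A r h) (hA : A.PosDef) :
    ∀ j, (∀ k ≤ j, r k ≠ 0) → CGInvariant A r h j
  | 0, _ => hcg.cgInvariant_zero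
  | j + 1, hne =>
    (hcg.cgInvariant hA j fun k hk => hne k (by omega)).succ hA hcg fun k hk => hne k (by omega)

theorem residual_orthogonal (hcg : IsCGSequence A r h) (hA : A.PosDef) {i j : ℕ} (hij : i < j)
    (hne : ∀ k ≤ j, r k ≠ 0) : r i ⬝ᵥ r j = 0 :=
  (hcg.cgInvariant hA j hne).residual_orthogonal i j hij le_rfl

end IsCGSequence

end

theorem stmt_1_general {n : ℕ} (A : Matrix (Fin n) (Fin n) ℝ)
    (hApos : A.PosDef) (b : Fin n → ℝ) (c : ℝ)
    (r h x : ℕ → Fin n → ℝ)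
    (hr0 : r 0 = b - A.mulVec (x 0))
    (hh0 : h 0 = r 0)
    (hrec : ∀ i : ℕ, r i ≠ 0 →
      r (i + 1) = r i - ((r i ⬝ᵥ r i) / (h i ⬝ᵥ A.mulVec (h i))) • A.mulVec (h i) ∧
      h (i + 1) = r (i + 1) + ((r (i + 1) ⬝ᵥ r (i + 1)) / (r i ⬝ᵥ r i)) • h i ∧
      x (i + 1) = x i + ((r i ⬝ᵥ r i) / (h i ⬝ᵥ A.mulVec (h i))) • h i) :
    (∀ i j : ℕ, i < j → (∀ k, k ≤ j → r k ≠ 0) → r i ⬝ᵥ r j = 0) ∧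
    ∃ m : ℕ, m ≤ n ∧ r m = 0 ∧
      ∀ y : Fin n → ℝ,
        c - b ⬝ᵥ x m + (1 / 2) * (x m ⬝ᵥ A.mulVec (x m)) ≤
          c - b ⬝ᵥ y + (1 / 2) * (y ⬝ᵥ A.mulVec y) := by
  have hcg : IsCGSequence A r h := ⟨hh0, fun i hi => (hrec i hi).1, fun i hi => (hrec i hi).2.1⟩
  have horth : ∀ i j, i < j → (∀ k ≤ j, r k ≠ 0) → r i ⬝ᵥ r j = 0 :=
    fun i j hij hne => hcg.residual_orthogonal hApos hij hne
  refine ⟨horth, ?_⟩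
  obtain ⟨m₀, hm₀n, hm₀⟩ := exists_le_card_eq_zero_of_dotProduct_eq_zero horth
  have hex : ∃ m, r m = 0 := ⟨m₀, hm₀⟩
  -- Only up to the first vanishing residual do the recurrences keep `r m = b - A x m`.
  refine ⟨Nat.find hex, (Nat.find_min' hex hm₀).trans (by simpa using hm₀n), Nat.find_spec hex, ?_⟩
  have hAx : A *ᵥ x (Nat.find hex) = b := by
    have hres := residual_eq_sub_mulVec hr0 (fun i hi => (hrec i hi).1)
      (fun i hi => (hrec i hi).2.2) (Nat.find hex) fun j hj => Nat.find_min hex hj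
    rw [Nat.find_spec hex, eq_comm, sub_eq_zero] at hres
    exact hres.symm
  exact quadratic_le_of_mulVec_eq hApos.posSemidef hAx c

/-- Conjugate gradient method. With `A` symmetric positive definite,
residuals `r i = b - A x i`, search directions `h i`, and the CG recurrences (with
step sizes `α i = |r i|²/(h iᵀ A h i)` and `β i = |r (i+1)|²/|r i|²`) holding as long
as the residuals are nonzero: the residuals are pairwise orthogonal, hence some
residual `r m` with `m ≤ n` vanishes, and the corresponding iterate `x m` is the
exact minimizer of `f x = c - bᵀx + (1/2)xᵀAx`. -/
theorem stmt_1 {n : ℕ} (A : Matrix (Fin n) (Fin n) ℝ) (hAsymm : A.IsSymm)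
    (hApos : A.PosDef) (b : Fin n → ℝ) (c : ℝ)
    (r h x : ℕ → Fin n → ℝ)
    (hr0 : r 0 = b - A.mulVec (x 0))
    (hh0 : h 0 = r 0)
    (hrec : ∀ i : ℕ, r i ≠ 0 →
      r (i + 1) = r i - ((r i ⬝ᵥ r i) / (h i ⬝ᵥ A.mulVec (h i))) • A.mulVec (h i) ∧
      h (i + 1) = r (i + 1) + ((r (i + 1) ⬝ᵥ r (i + 1)) / (r i ⬝ᵥ r i)) • h i ∧
      x (i + 1) = x i + ((r i ⬝ᵥ r i) / (h i ⬝ᵥ A.mulVec (h i))) • h i) :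
    (∀ i j : ℕ, i < j → (∀ k, k ≤ j → r k ≠ 0) → r i ⬝ᵥ r j = 0) ∧
    ∃ m : ℕ, m ≤ n ∧ r m = 0 ∧
      ∀ y : Fin n → ℝ,
        c - b ⬝ᵥ x m + (1 / 2) * (x m ⬝ᵥ A.mulVec (x m)) ≤
          c - b ⬝ᵥ y + (1 / 2) * (y ⬝ᵥ A.mulVec y) :=
  stmt_1_general A hApos b c r h x hr0 hh0 hrec
end

section
/- Let P ⊂ ℝ² be the pentagon above with parameter a ∈ (1,2], and suppose u : P → ℝ satisfies Guillemin boundary conditions with S = −u^{ij}_{ij} affine-linear, S = A(x₁+x₂) + B. If the linear functional L_S(f) = ∫_{∂P} 2f dσ − ∫_P S f dx vanishes for f = 1, f = x₁, and f = x₂, then A = 48(1−a³)/(a⁶+6a⁵+9a⁴+4a³−3a²−6a+1) and B = 12(a⁵+7a⁴−2a³+2a²−5a+5)/(a⁶+6a⁵+9a⁴+4a³−3a²−6a+1). -/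
/-!
The constraints `L_S(1) = 0` and `L_S(x₁) = 0` are two linear equations in `A` and `B`.
Slicing the pentagon vertically (over `x₁ ∈ [-1, 0]` the slice is `[-1, a - 1]`, over
`x₁ ∈ [0, a - 1]` it is `[-1, a - 1 - x₁]`), Fubini turns every coefficient into an iterated
integral of a polynomial. Then `144` times the determinant of the system is the denominator
`D(a)`, which is positive for `a ≥ 1` since `D(1 + t)` has positive coefficients, and Cramer's
rule gives `A` and `B`.
-/

open MeasureTheory intervalIntegral

/-- The pentagon `P` with parameter `a`, cut out by `l₁ = 1+x₁`, `l₂ = 1+x₂`,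
`l₃ = a−1−x₁`, `l₄ = a−1−x₂`, `l₅ = a−1−x₁−x₂`. -/
def pent (a : ℝ) : Set (ℝ × ℝ) :=
  {p : ℝ × ℝ | 0 ≤ 1 + p.1 ∧ 0 ≤ 1 + p.2 ∧ 0 ≤ a - 1 - p.1 ∧
    0 ≤ a - 1 - p.2 ∧ 0 ≤ a - 1 - p.1 - p.2}

/-- The boundary integral `∫_{∂P} f dσ`, where `dσ` is the measure on each edge
normalized by `|dσ ∧ dl_r| = dx`: the four axis-parallel edges carry Lebesgue
length measure, and the slanted edge `x₁ + x₂ = a − 1` is parametrized by `x₁`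
(consistent with `dt ∧ dl₅ = ±dx₁ ∧ dx₂`). -/
noncomputable def bdryInt (a : ℝ) (f : ℝ × ℝ → ℝ) : ℝ :=
  (∫ t in (-1 : ℝ)..(a - 1), f (-1, t)) +
  (∫ t in (-1 : ℝ)..(a - 1), f (t, -1)) +
  (∫ t in (-1 : ℝ)..(0 : ℝ), f (a - 1, t)) +
  (∫ t in (-1 : ℝ)..(0 : ℝ), f (t, a - 1)) +
  (∫ t in (0 : ℝ)..(a - 1), f (t, a - 1 - t))

/-- The linear functional `L_S(f) = ∫_{∂P} 2f dσ − ∫_P S f dx` for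
`S = A(x₁+x₂) + B`. -/
noncomputable def LS (a A B : ℝ) (f : ℝ × ℝ → ℝ) : ℝ :=
  bdryInt a (fun p => 2 * f p) -
    ∫ p in pent a, (A * (p.1 + p.2) + B) * f p

section RegionBetween

variable {α E : Type*} [NormedAddCommGroup E] [NormedSpace ℝ E]
  {s : Set α} {lo hi : α → ℝ} {F : α × ℝ → E}

lemma integral_indicator_region_between_cc_slice (x : α) :
    ∫ y, {p : α × ℝ | p.1 ∈ s ∧ p.2 ∈ Set.Icc (lo p.1) (hi p.1)}.indicator F (x, y) =
      s.indicator (fun x => ∫ y in Set.Icc (lo x) (hi x), F (x, y)) x := by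
  by_cases hx : x ∈ s
  · rw [Set.indicator_of_mem hx, ← MeasureTheory.integral_indicator measurableSet_Icc]
    congr 1 with y
    simp only [Set.indicator, Set.mem_ofPred_eq, hx, true_and]
  · simp [Set.indicator, hx]

lemma integrableOn_integral_region_between_cc [MeasurableSpace α] {μ : Measure α}
    (hs : MeasurableSet s) (hlo : Measurable lo) (hhi : Measurable hi)
    (hF : IntegrableOn F {p | p.1 ∈ s ∧ p.2 ∈ Set.Icc (lo p.1) (hi p.1)} (μ.prod volume)) :
    IntegrableOn (fun x => ∫ y in Set.Icc (lo x) (hi x), F (x, y)) s μ := by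
  rw [← integrable_indicator_iff (measurableSet_region_between_cc hlo hhi hs)] at hF
  rw [← integrable_indicator_iff hs]
  simpa only [integral_indicator_region_between_cc_slice] using hF.integral_prod_left

lemma setIntegral_region_between_cc [MeasurableSpace α] {μ : Measure α} [SFinite μ]
    [CompleteSpace E] (hs : MeasurableSet s) (hlo : Measurable lo) (hhi : Measurable hi)
    (hF : IntegrableOn F {p | p.1 ∈ s ∧ p.2 ∈ Set.Icc (lo p.1) (hi p.1)} (μ.prod volume)) :
    ∫ p in {p : α × ℝ | p.1 ∈ s ∧ p.2 ∈ Set.Icc (lo p.1) (hi p.1)}, F p ∂(μ.prod volume) =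
      ∫ x in s, (∫ y in Set.Icc (lo x) (hi x), F (x, y)) ∂μ := by
  have hR := measurableSet_region_between_cc hlo hhi hs
  rw [← integrable_indicator_iff hR] at hF
  rw [← MeasureTheory.integral_indicator hR, integral_prod _ hF,
    ← MeasureTheory.integral_indicator hs]
  simp only [integral_indicator_region_between_cc_slice]

end RegionBetween

lemma pent_eq_region_between_cc (a : ℝ) :
    pent a = {p : ℝ × ℝ | p.1 ∈ Set.Icc (-1) (a - 1) ∧
      p.2 ∈ Set.Icc (-1) (min (a - 1) (a - 1 - p.1))} := by
  ext ⟨x, y⟩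
  simp only [pent, Set.mem_Icc, le_min_iff, Set.mem_ofPred_eq]
  constructor
  · rintro ⟨h1, h2, h3, h4, h5⟩
    exact ⟨⟨by linarith, by linarith⟩, by linarith, by linarith, by linarith⟩
  · rintro ⟨⟨h1, h3⟩, h2, h4, h5⟩
    exact ⟨by linarith, by linarith, by linarith, by linarith, by linarith⟩

lemma pent_subset_Icc (a : ℝ) : pent a ⊆ Set.Icc (-1, -1) (a - 1, a - 1) :=
  fun _ ⟨h1, h2, h3, h4, _⟩ => ⟨⟨by linarith, by linarith⟩, by linarith, by linarith⟩

lemma Continuous.integrableOn_pent {F : ℝ × ℝ → ℝ} (hF : Continuous F) (a : ℝ) :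
    IntegrableOn F (pent a) :=
  (hF.continuousOn.integrableOn_compact isCompact_Icc).mono_set (pent_subset_Icc a)

lemma setIntegral_Icc_eq_intervalIntegral {f : ℝ → ℝ} {x y : ℝ} (h : x ≤ y) :
    ∫ t in Set.Icc x y, f t = ∫ t in x..y, f t := by
  rw [integral_Icc_eq_integral_Ioc, integral_of_le h]

lemma setIntegral_pent {a : ℝ} (ha : 1 ≤ a) {F : ℝ × ℝ → ℝ} (hF : Continuous F) :
    ∫ p in pent a, F p =
      (∫ x in (-1 : ℝ)..0, ∫ y in (-1 : ℝ)..(a - 1), F (x, y)) +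
      ∫ x in (0 : ℝ)..(a - 1), ∫ y in (-1 : ℝ)..(a - 1 - x), F (x, y) := by
  have hlo : Measurable fun _ : ℝ => (-1 : ℝ) := measurable_const
  have hhi : Measurable fun x : ℝ => min (a - 1) (a - 1 - x) := by fun_prop
  have hFR := hF.integrableOn_pent a
  rw [pent_eq_region_between_cc, Measure.volume_eq_prod] at hFR ⊢
  have hG := integrableOn_integral_region_between_cc measurableSet_Icc hlo hhi hFR
  rw [setIntegral_region_between_cc measurableSet_Icc hlo hhi hFR]
  rw [← Set.Icc_union_Ioc_eq_Icc (by norm_num : (-1 : ℝ) ≤ 0) (by linarith : (0 : ℝ) ≤ a - 1)]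
    at hG ⊢
  rw [setIntegral_union ((Set.Iic_disjoint_Ioc le_rfl).mono_left Set.Icc_subset_Iic_self)
    measurableSet_Ioc (hG.mono_set Set.subset_union_left) (hG.mono_set Set.subset_union_right),
    ← setIntegral_Icc_eq_intervalIntegral (by norm_num), integral_of_le (by linarith)]
  congr 1
  · refine setIntegral_congr_fun measurableSet_Icc fun x ⟨_, hx⟩ => ?_
    rw [min_eq_left (by linarith), setIntegral_Icc_eq_intervalIntegral (by linarith)]
  · refine setIntegral_congr_fun measurableSet_Ioc fun x ⟨_, hx⟩ => ?_
    rw [min_eq_right (by linarith), setIntegral_Icc_eq_intervalIntegral (by linarith)]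

lemma integral_eq_cubic {f : ℝ → ℝ} (c₀ c₁ c₂ c₃ : ℝ)
    (hf : ∀ t, f t = c₀ + c₁ * t + c₂ * t ^ 2 + c₃ * t ^ 3) (x y : ℝ) :
    ∫ t in x..y, f t =
      (c₀ * y + c₁ * y ^ 2 / 2 + c₂ * y ^ 3 / 3 + c₃ * y ^ 4 / 4) -
        (c₀ * x + c₁ * x ^ 2 / 2 + c₂ * x ^ 3 / 3 + c₃ * x ^ 4 / 4) := by
  obtain rfl : f = fun t => c₀ + c₁ * t + c₂ * t ^ 2 + c₃ * t ^ 3 := funext hf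
  have hderiv : ∀ t, HasDerivAt
      (fun s => c₀ * s + c₁ * s ^ 2 / 2 + c₂ * s ^ 3 / 3 + c₃ * s ^ 4 / 4)
      (c₀ + c₁ * t + c₂ * t ^ 2 + c₃ * t ^ 3) t := fun t =>
    ((((hasDerivAt_id t).const_mul c₀).add
      (((hasDerivAt_pow 2 t).const_mul c₁).div_const 2)).add
      (((hasDerivAt_pow 3 t).const_mul c₂).div_const 3)).add
      (((hasDerivAt_pow 4 t).const_mul c₃).div_const 4) |>.congr_deriv (by push_cast; ring)
  exact integral_eq_sub_of_hasDerivAt (fun t _ => hderiv t) (Continuous.intervalIntegrable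
    (by fun_prop) x y)

lemma bdryInt_const (a c : ℝ) : bdryInt a (fun _ => c) = (3 * a + 1) * c := by
  simp only [bdryInt, intervalIntegral.integral_const, smul_eq_mul]
  ring

lemma bdryInt_fst_mul (a c : ℝ) : bdryInt a (fun p => c * p.1) = c * (a ^ 2 - 2 * a - 1) := by
  simp only [bdryInt, intervalIntegral.integral_const, smul_eq_mul]
  rw [intervalIntegral.integral_const_mul, intervalIntegral.integral_const_mul,
    intervalIntegral.integral_const_mul]
  simp only [integral_id]
  ring

lemma setIntegral_pent_affine (A B : ℝ) {a : ℝ} (ha : 1 ≤ a) :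
    ∫ p in pent a, A * (p.1 + p.2) + B =
      A * (a ^ 3 / 3 - 2 * a + 2 / 3) + B * (a ^ 2 / 2 + a - 1 / 2) := by
  rw [setIntegral_pent ha (by fun_prop)]
  have hrect : ∀ x : ℝ, ∫ y in (-1 : ℝ)..(a - 1), A * (x + y) + B =
      (a * B - a * A + a ^ 2 * A / 2) + (a * A) * x + 0 * x ^ 2 + 0 * x ^ 3 := by
    intro x
    rw [integral_eq_cubic (A * x + B) A 0 0 (fun y => by ring)]
    ring
  have htrap : ∀ x : ℝ, ∫ y in (-1 : ℝ)..(a - 1 - x), A * (x + y) + B =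
      (a * B - a * A + a ^ 2 * A / 2) + (A - B) * x + (-(A / 2)) * x ^ 2 + 0 * x ^ 3 := by
    intro x
    rw [integral_eq_cubic (A * x + B) A 0 0 (fun y => by ring)]
    ring
  simp only [hrect, htrap]
  rw [integral_eq_cubic _ _ _ _ (fun _ => rfl), integral_eq_cubic _ _ _ _ (fun _ => rfl)]
  ring

lemma setIntegral_pent_affine_mul_fst (A B : ℝ) {a : ℝ} (ha : 1 ≤ a) :
    ∫ p in pent a, (A * (p.1 + p.2) + B) * p.1 =
      A * (a ^ 4 / 8 - a ^ 3 / 6 - 3 * a ^ 2 / 4 + 11 * a / 6 - 11 / 24) +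
        B * (a ^ 3 / 6 - a + 1 / 3) := by
  rw [setIntegral_pent ha (by fun_prop)]
  have hrect : ∀ x : ℝ, ∫ y in (-1 : ℝ)..(a - 1), (A * (x + y) + B) * x =
      0 + (a * B - a * A + a ^ 2 * A / 2) * x + (a * A) * x ^ 2 + 0 * x ^ 3 := by
    intro x
    rw [integral_eq_cubic ((A * x + B) * x) (A * x) 0 0 (fun y => by ring)]
    ring
  have htrap : ∀ x : ℝ, ∫ y in (-1 : ℝ)..(a - 1 - x), (A * (x + y) + B) * x =
      0 + (a * B - a * A + a ^ 2 * A / 2) * x + (A - B) * x ^ 2 + (-(A / 2)) * x ^ 3 := by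
    intro x
    rw [integral_eq_cubic ((A * x + B) * x) (A * x) 0 0 (fun y => by ring)]
    ring
  simp only [hrect, htrap]
  rw [integral_eq_cubic _ _ _ _ (fun _ => rfl), integral_eq_cubic _ _ _ _ (fun _ => rfl)]
  ring

lemma LS_const_one (A B : ℝ) {a : ℝ} (ha : 1 ≤ a) :
    LS a A B (fun _ => 1) =
      6 * a + 2 - (A * (a ^ 3 / 3 - 2 * a + 2 / 3) + B * (a ^ 2 / 2 + a - 1 / 2)) := by
  simp only [LS, mul_one, bdryInt_const, setIntegral_pent_affine A B ha]
  ring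

lemma LS_fst (A B : ℝ) {a : ℝ} (ha : 1 ≤ a) :
    LS a A B (fun p => p.1) =
      2 * (a ^ 2 - 2 * a - 1) -
        (A * (a ^ 4 / 8 - a ^ 3 / 6 - 3 * a ^ 2 / 4 + 11 * a / 6 - 11 / 24) +
          B * (a ^ 3 / 6 - a + 1 / 3)) := by
  rw [LS, bdryInt_fst_mul, setIntegral_pent_affine_mul_fst A B ha]

lemma pent_denom_pos {a : ℝ} (ha : 1 ≤ a) :
    0 < a ^ 6 + 6 * a ^ 5 + 9 * a ^ 4 + 4 * a ^ 3 - 3 * a ^ 2 - 6 * a + 1 := by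
  have ht : 0 ≤ a - 1 := sub_nonneg.2 ha
  have hexpand : a ^ 6 + 6 * a ^ 5 + 9 * a ^ 4 + 4 * a ^ 3 - 3 * a ^ 2 - 6 * a + 1 =
      (a - 1) ^ 6 + 12 * (a - 1) ^ 5 + 54 * (a - 1) ^ 4 + 120 * (a - 1) ^ 3 +
        138 * (a - 1) ^ 2 + 72 * (a - 1) + 12 := by ring
  rw [hexpand]
  positivity

theorem stmt_12_general (a A B : ℝ) (ha : 1 < a)
    (h1 : LS a A B (fun _ => 1) = 0)
    (hx1 : LS a A B (fun p => p.1) = 0) :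
    A = 48 * (1 - a ^ 3) /
        (a ^ 6 + 6 * a ^ 5 + 9 * a ^ 4 + 4 * a ^ 3 - 3 * a ^ 2 - 6 * a + 1) ∧
    B = 12 * (a ^ 5 + 7 * a ^ 4 - 2 * a ^ 3 + 2 * a ^ 2 - 5 * a + 5) /
        (a ^ 6 + 6 * a ^ 5 + 9 * a ^ 4 + 4 * a ^ 3 - 3 * a ^ 2 - 6 * a + 1) := by
  rw [LS_const_one A B ha.le] at h1
  rw [LS_fst A B ha.le] at hx1
  have hD := (pent_denom_pos ha.le).ne'
  constructor
  · rw [eq_div_iff hD]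
    linear_combination 144 * (a ^ 3 / 6 - a + 1 / 3) * h1 - 144 * (a ^ 2 / 2 + a - 1 / 2) * hx1
  · rw [eq_div_iff hD]
    linear_combination 144 * (a ^ 3 / 3 - 2 * a + 2 / 3) * hx1 -
      144 * (a ^ 4 / 8 - a ^ 3 / 6 - 3 * a ^ 2 / 4 + 11 * a / 6 - 11 / 24) * h1

/-- On the pentagon with parameter `a ∈ (1,2]`, if the affine
scalar curvature `S = A(x₁+x₂)+B` satisfies the constraints
`L_S(1) = L_S(x₁) = L_S(x₂) = 0`, then `A` and `B` are given by the stated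
rational functions of `a`. -/
theorem stmt_12 (a A B : ℝ) (ha : 1 < a) (ha' : a ≤ 2)
    (h1 : LS a A B (fun _ => 1) = 0)
    (hx1 : LS a A B (fun p => p.1) = 0)
    (hx2 : LS a A B (fun p => p.2) = 0) :
    A = 48 * (1 - a ^ 3) /
        (a ^ 6 + 6 * a ^ 5 + 9 * a ^ 4 + 4 * a ^ 3 - 3 * a ^ 2 - 6 * a + 1) ∧
    B = 12 * (a ^ 5 + 7 * a ^ 4 - 2 * a ^ 3 + 2 * a ^ 2 - 5 * a + 5) /
        (a ^ 6 + 6 * a ^ 5 + 9 * a ^ 4 + 4 * a ^ 3 - 3 * a ^ 2 - 6 * a + 1) :=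
  stmt_12_general a A B ha h1 hx1
end
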